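/- Let 𝕃 ⊆ ℝ^d×ℝ be any closed convex cone, let A_0,…,A_T ∈ 𝒜, and suppose the boundedness assumption holds. Then for every (y,b) ∈ 𝕃 \ {0}, the Algorithm 3 iterates (with cone 𝕃 and stepsize γ = 1) satisfy |M_T| − Σ_{t∈M_T} L_hinge((y,b); (s(A_t,y_t,b_t),1), ℓ(A_t)) ≤ sqrt(‖y‖₂² + b²) · sqrt(D̃² + 1) · sqrt(|M_T|). -/
import Mathlib


noncomputable section
open scoped Classical
open scoped RealInnerProductSpace

/-- Feature space: `ℝ^d` with the Euclidean (`ℓ₂`) norm as ambient norm. -/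
abbrev E (d : ℕ) : Type := EuclideanSpace ℝ (Fin d)

/-- Sign function with the convention `sgn 0 = +1`. -/
def sgn (t : ℝ) : ℝ := if 0 ≤ t then 1 else -1

/-- Dual norm `‖y‖_* = max { ⟪y,x⟫ : ‖x‖ ≤ 1 }` of a (semi)norm `p`. -/
def dualNorm {d : ℕ} (p : Seminorm ℝ (E d)) (y : E d) : ℝ :=
  sSup ((fun x => ⟪y, x⟫) '' {x | p x ≤ 1})

/-- Predicted label `p̂(x,y,b) = sgn(⟪y,x⟫ + b - 2‖y‖_*/c)`. -/
def pred {d : ℕ} (p : Seminorm ℝ (E d)) (c : ℝ) (x y : E d) (b : ℝ) : ℝ :=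
  sgn (⟪y, x⟫ + b - 2 * dualNorm p y / c)

/-- Agent response `r(A,y,b)`. -/
def resp {d : ℕ} (p : Seminorm ℝ (E d)) (v : E d → E d) (c : ℝ)
    (A y : E d) (b : ℝ) : E d :=
  if y ≠ 0 ∧ 0 ≤ (⟪y, A⟫ + b) / dualNorm p y ∧ (⟪y, A⟫ + b) / dualNorm p y < 2 / c
  then A + (2 / c - (⟪y, A⟫ + b) / dualNorm p y) • v y
  else A

/-- Proxy point `s(A,y,b)`. -/
def proxy {d : ℕ} (p : Seminorm ℝ (E d)) (v : E d → E d) (lbl : E d → ℝ) (c : ℝ)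
    (A y : E d) (b : ℝ) : E d :=
  if y ≠ 0 ∧ 0 ≤ (⟪y, A⟫ + b) / dualNorm p y ∧ (⟪y, A⟫ + b) / dualNorm p y < 2 / c
      ∧ lbl A = -1
  then A - ((⟪y, A⟫ + b) / dualNorm p y) • v y
  else resp p v c A y b

/-- The constant `C = sup_y ‖v(y)‖₂`. -/
def Cconst {d : ℕ} (v : E d → E d) : ℝ := sSup (Set.range fun y => ‖v y‖)

/-- Hinge loss `L_hinge((y,b); (x,1), λ) = max{0, 1 - λ(⟪y,x⟫ + b)}`. -/
def hinge {d : ℕ} (q : E d × ℝ) (x : E d) (lab : ℝ) : ℝ :=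
  max 0 (1 - lab * (⟪q.1, x⟫ + q.2))

lemma dualNorm_zero {d : ℕ} (p : Seminorm ℝ (E d)) : dualNorm p 0 = 0 := by
  unfold dualNorm
  have h : (fun x : E d => ⟪(0 : E d), x⟫) '' {x | p x ≤ 1} = {0} := by
    ext t
    constructor
    · rintro ⟨x, -, rfl⟩; simp [inner_zero_left]
    · rintro rfl; exact ⟨0, by simp, by simp [inner_zero_left]⟩
  rw [h, csSup_singleton]

lemma dualNorm_nonneg {d : ℕ} (p : Seminorm ℝ (E d)) (y : E d) : 0 ≤ dualNorm p y := by
  unfold dualNorm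
  by_cases hbdd : BddAbove ((fun x : E d => ⟪y, x⟫) '' {x | p x ≤ 1})
  · have h0 : (0 : ℝ) ∈ (fun x : E d => ⟪y, x⟫) '' {x | p x ≤ 1} :=
      ⟨0, by simp, by simp [inner_zero_right]⟩
    exact le_csSup hbdd h0
  · rw [Real.sSup_of_not_bddAbove hbdd]

lemma proj_contract_prod {d : ℕ} {K : Set (E d × ℝ)} (hK : Convex ℝ K)
    {u z w : E d × ℝ} (hz : z ∈ K) (hw : w ∈ K)
    (hmin : ∀ q ∈ K, ‖z.1 - u.1‖ ^ 2 + (z.2 - u.2) ^ 2 ≤ ‖q.1 - u.1‖ ^ 2 + (q.2 - u.2) ^ 2) :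
    ‖z.1 - w.1‖ ^ 2 + (z.2 - w.2) ^ 2 ≤ ‖u.1 - w.1‖ ^ 2 + (u.2 - w.2) ^ 2 := by
  set a : ℝ := ⟪z.1 - u.1, w.1 - z.1⟫ + (z.2 - u.2) * (w.2 - z.2) with ha
  set B : ℝ := ‖w.1 - z.1‖ ^ 2 + (w.2 - z.2) ^ 2 with hB
  have hB0 : 0 ≤ B := by positivity
  have hstep : ∀ θ : ℝ, 0 < θ → θ ≤ 1 → 0 ≤ 2 * a + θ * B := by
    intro θ hθ0 hθ1
    have hqK : (1 - θ) • z + θ • w ∈ K := hK hz hw (by linarith) hθ0.le (by ring)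
    have h2 := hmin _ hqK
    have e1 : ((1 - θ) • z + θ • w).1 - u.1 = (z.1 - u.1) + θ • (w.1 - z.1) := by
      simp only [Prod.fst_add, Prod.smul_fst]
      rw [smul_sub, sub_smul, one_smul]
      abel
    have e2 : ((1 - θ) • z + θ • w).2 - u.2 = (z.2 - u.2) + θ * (w.2 - z.2) := by
      simp only [Prod.snd_add, Prod.smul_snd, smul_eq_mul]
      ring
    rw [e1, e2, norm_add_sq_real, real_inner_smul_right, norm_smul, Real.norm_eq_abs,
      mul_pow, sq_abs] at h2
    have hθ2 : 0 < θ * θ := mul_pos hθ0 hθ0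
    nlinarith [h2]
  have hkey : 0 ≤ a := by
    by_contra hneg
    push_neg at hneg
    rcases eq_or_lt_of_le hB0 with hBz | hBp
    · have := hstep 1 one_pos le_rfl
      nlinarith
    · have hθ : 0 < min 1 (-a / B) := by
        exact lt_min one_pos (div_pos (by linarith) hBp)
      have h1 := hstep _ hθ (min_le_left _ _)
      have h2 : (min 1 (-a / B)) * B ≤ (-a / B) * B :=
        mul_le_mul_of_nonneg_right (min_le_right _ _) hB0
      rw [div_mul_cancel₀ _ (ne_of_gt hBp)] at h2
      linarith
  have e3 : u.1 - w.1 = -((z.1 - u.1) + (w.1 - z.1)) := by abel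
  have e4 : z.1 - w.1 = -(w.1 - z.1) := by abel
  rw [e3, e4, norm_neg, norm_neg, norm_add_sq_real]
  nlinarith [hkey, sq_nonneg (z.2 - u.2), norm_nonneg (z.1 - u.1), sq_nonneg ((z.2 - u.2) + (w.2 - z.2))]

lemma keyB {d : ℕ} (p : Seminorm ℝ (E d)) (c : ℝ) (hc : 0 < c)
    (v : E d → E d)
    (hv : ∀ y : E d, y ≠ 0 → p (v y) ≤ 1 ∧ ⟪y, v y⟫ = dualNorm p y)
    (lbl : E d → ℝ) (hlbl : ∀ A : E d, lbl A = 1 ∨ lbl A = -1)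
    (A y : E d) (b : ℝ)
    (hm : pred p c (resp p v c A y b) y b ≠ lbl A) :
    lbl A * (⟪y, proxy p v lbl c A y b⟫ + b) ≤ 0 := by
  by_cases hy : y = 0
  · subst hy
    have hr : resp p v c A 0 b = A := by
      unfold resp; rw [if_neg]; rintro ⟨h, -⟩; exact h rfl
    have hs : proxy p v lbl c A 0 b = A := by
      unfold proxy; rw [if_neg, hr]; rintro ⟨h, -⟩; exact h rfl
    rw [hs, inner_zero_left, zero_add]
    unfold pred sgn at hm
    rw [hr, inner_zero_left, dualNorm_zero, zero_add] at hm
    have h20 : 2 * (0:ℝ) / c = 0 := by ring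
    rw [h20, sub_zero] at hm
    rcases hlbl A with h1 | h1 <;> rw [h1] at hm ⊢
    · by_cases hb : 0 ≤ b
      · rw [if_pos hb] at hm; exact absurd rfl hm
      · push_neg at hb; linarith
    · by_cases hb : 0 ≤ b
      · linarith
      · rw [if_neg hb] at hm; exact absurd rfl hm
  · have hyv : ⟪y, v y⟫ = dualNorm p y := (hv y hy).2
    have hN0 : 0 ≤ dualNorm p y := dualNorm_nonneg p y
    by_cases hN : dualNorm p y = 0
    · have hvy0 : ⟪y, v y⟫ = 0 := by rw [hyv, hN]
      have hr : ⟪y, resp p v c A y b⟫ = ⟪y, A⟫ := by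
        unfold resp; split_ifs
        · rw [inner_add_right, real_inner_smul_right, hvy0, mul_zero, add_zero]
        · rfl
      have hs : ⟪y, proxy p v lbl c A y b⟫ = ⟪y, A⟫ := by
        unfold proxy; split_ifs with h
        · rw [inner_sub_right, real_inner_smul_right, hvy0, mul_zero, sub_zero]
        · exact hr
      unfold pred sgn at hm
      rw [hr, hN] at hm
      have h20 : 2 * (0:ℝ) / c = 0 := by ring
      rw [h20, sub_zero] at hm
      rw [hs]
      rcases hlbl A with h1 | h1 <;> rw [h1] at hm ⊢
      · by_cases hb : 0 ≤ ⟪y, A⟫ + b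
        · rw [if_pos hb] at hm; exact absurd rfl hm
        · push_neg at hb; linarith
      · by_cases hb : 0 ≤ ⟪y, A⟫ + b
        · linarith
        · rw [if_neg hb] at hm; exact absurd rfl hm
    · have hNpos : 0 < dualNorm p y := lt_of_le_of_ne hN0 (Ne.symm hN)
      set N := dualNorm p y with hNdef
      set u := (⟪y, A⟫ + b) / N with hu
      have huN : u * N = ⟪y, A⟫ + b := div_mul_cancel₀ _ hN
      by_cases hcond : 0 ≤ u ∧ u < 2 / c
      · have hr : resp p v c A y b = A + (2 / c - u) • v y := by
          unfold resp; rw [if_pos ⟨hy, hcond.1, hcond.2⟩]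
        have hpred : pred p c (resp p v c A y b) y b = 1 := by
          unfold pred sgn
          rw [hr, inner_add_right, real_inner_smul_right, hyv]
          have harg : ⟪y, A⟫ + (2 / c - u) * N + b - 2 * N / c = 0 := by
            linear_combination (-1 : ℝ) * huN
          rw [harg, if_pos le_rfl]
        have hlblA : lbl A = -1 := by
          rcases hlbl A with h1 | h1
          · exact absurd (hpred.trans h1.symm) hm
          · exact h1
        have hs : proxy p v lbl c A y b = A - u • v y := by
          unfold proxy; rw [if_pos ⟨hy, hcond.1, hcond.2, hlblA⟩]
        rw [hs, hlblA, inner_sub_right, real_inner_smul_right, hyv]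
        nlinarith [huN]
      · have hr : resp p v c A y b = A := by
          unfold resp; rw [if_neg]; rintro ⟨-, h1, h2⟩; exact hcond ⟨h1, h2⟩
        have hs : proxy p v lbl c A y b = A := by
          unfold proxy; rw [if_neg, hr]; rintro ⟨-, h1, h2, -⟩; exact hcond ⟨h1, h2⟩
        rw [hs]
        unfold pred sgn at hm
        rw [hr] at hm
        rcases not_and_or.mp hcond with h | h
        · push_neg at h
          have hib : ⟪y, A⟫ + b < 0 := by nlinarith [huN]
          have harg : ¬ (0 ≤ ⟪y, A⟫ + b - 2 * N / c) := by
            push_neg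
            have : 0 < 2 * N / c := by positivity
            linarith
          rw [if_neg harg] at hm
          have hlblA : lbl A = 1 := by
            rcases hlbl A with h1 | h1
            · exact h1
            · exact absurd h1.symm hm
          rw [hlblA]; linarith
        · push_neg at h
          have hupos : 0 < u := lt_of_lt_of_le (by positivity) h
          have harg : 0 ≤ ⟪y, A⟫ + b - 2 * N / c := by
            have h2 : 2 / c * N ≤ u * N := mul_le_mul_of_nonneg_right h hN0
            have h3 : 2 * N / c = 2 / c * N := by ring
            linarith [huN, h2, h3]
          rw [if_pos harg] at hm
          have hlblA : lbl A = -1 := by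
            rcases hlbl A with h1 | h1
            · exact absurd h1.symm hm
            · exact h1
          rw [hlblA]; nlinarith [huN]

lemma proxy_norm_le {d : ℕ} (p : Seminorm ℝ (E d)) (c : ℝ) (hc : 0 < c)
    (v : E d → E d) (hCbdd : BddAbove (Set.range fun y => ‖v y‖))
    (lbl : E d → ℝ) (A y : E d) (b : ℝ) :
    ‖proxy p v lbl c A y b‖ ≤ ‖A‖ + 2 * Cconst v / c := by
  have hvC : ∀ z : E d, ‖v z‖ ≤ Cconst v := fun z => le_csSup hCbdd ⟨z, rfl⟩
  have hC0 : 0 ≤ Cconst v := le_trans (norm_nonneg _) (hvC 0)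
  have hcoef : ∀ t : ℝ, 0 ≤ t → t ≤ 2 / c → ∀ z : E d, ‖t • v z‖ ≤ 2 * Cconst v / c := by
    intro t ht0 ht2 z
    rw [norm_smul, Real.norm_eq_abs, abs_of_nonneg ht0]
    calc t * ‖v z‖ ≤ (2 / c) * Cconst v :=
          mul_le_mul ht2 (hvC z) (norm_nonneg _) (by positivity)
      _ = 2 * Cconst v / c := by ring
  unfold proxy resp
  split_ifs with h1 h2
  · obtain ⟨-, hu0, hu2, -⟩ := h1
    calc ‖A - ((⟪y, A⟫ + b) / dualNorm p y) • v y‖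
        ≤ ‖A‖ + ‖((⟪y, A⟫ + b) / dualNorm p y) • v y‖ := norm_sub_le _ _
      _ ≤ ‖A‖ + 2 * Cconst v / c := by linarith [hcoef _ hu0 hu2.le y]
  · obtain ⟨-, hu0, hu2⟩ := h2
    calc ‖A + (2 / c - (⟪y, A⟫ + b) / dualNorm p y) • v y‖
        ≤ ‖A‖ + ‖(2 / c - (⟪y, A⟫ + b) / dualNorm p y) • v y‖ := norm_add_le _ _
      _ ≤ ‖A‖ + 2 * Cconst v / c := by
          linarith [hcoef (2 / c - (⟪y, A⟫ + b) / dualNorm p y) (by linarith) (by linarith) y]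
  · have : 0 ≤ 2 * Cconst v / c := by positivity
    linarith

lemma one_sub_hinge_le {d : ℕ} (yy : E d) (bb : ℝ) (x : E d) (l : ℝ) :
    1 - hinge (yy, bb) x l ≤ l * (⟪yy, x⟫ + bb) := by
  unfold hinge
  have h := le_max_right (0 : ℝ) (1 - l * (⟪(yy, bb).1, x⟫ + (yy, bb).2))
  simp only [Prod.fst, Prod.snd] at h ⊢
  linarith

lemma step_bound {d : ℕ} {L : Set (E d × ℝ)} (hL : Convex ℝ L)
    (yt ynext s yy : E d) (bt bnext lab bb r R2 h : ℝ)
    (hmemz : (ynext, bnext) ∈ L) (hwL : (r • yy, r * bb) ∈ L)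
    (hmin : ∀ q ∈ L,
      ‖ynext - (yt + lab • s)‖ ^ 2 + (bnext - (bt + lab)) ^ 2 ≤
      ‖q.1 - (yt + lab • s)‖ ^ 2 + (q.2 - (bt + lab)) ^ 2)
    (hkey : lab * (⟪yt, s⟫ + bt) ≤ 0)
    (hh : 1 - h ≤ lab * (⟪yy, s⟫ + bb))
    (hlab : lab * lab = 1)
    (hssq : ‖s‖ ^ 2 + 1 ≤ R2)
    (hr : 0 < r) :
    ‖ynext - r • yy‖ ^ 2 + (bnext - r * bb) ^ 2 ≤
      ‖yt - r • yy‖ ^ 2 + (bt - r * bb) ^ 2 + (R2 - 2 * r * (1 - h)) := by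
  have hcon := proj_contract_prod hL (u := (yt + lab • s, bt + lab))
    (z := (ynext, bnext)) (w := (r • yy, r * bb)) hmemz hwL hmin
  simp only at hcon
  have hvec : (yt + lab • s) - r • yy = (yt - r • yy) + lab • s :=
    add_sub_right_comm _ _ _
  rw [hvec, norm_add_sq_real, real_inner_smul_right, inner_sub_left,
    real_inner_smul_left] at hcon
  have hnsm : ‖lab • s‖ ^ 2 = lab * lab * ‖s‖ ^ 2 := by
    rw [norm_smul, Real.norm_eq_abs, mul_pow, sq_abs]; ring
  rw [hnsm, hlab, one_mul] at hcon
  have hk2 : 2 * r * (1 - h) ≤ 2 * r * (lab * (⟪yy, s⟫ + bb)) :=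
    mul_le_mul_of_nonneg_left hh (by positivity)
  nlinarith [hcon, hkey, hk2, hssq, hlab]

lemma master_alg (m S N2 R2 : ℝ) (hm : 0 < m) (hN2 : 0 < N2) (hR2 : 0 < R2)
    (H : ∀ r : ℝ, 0 < r → 0 ≤ r * r * N2 + (m * (R2 - 2 * r) + 2 * r * S)) :
    m - S ≤ Real.sqrt N2 * Real.sqrt R2 * Real.sqrt m := by
  have hNn := Real.sqrt_pos.mpr hN2
  have hRr := Real.sqrt_pos.mpr hR2
  have hsm := Real.sqrt_pos.mpr hm
  have hNnsq : Real.sqrt N2 * Real.sqrt N2 = N2 := Real.mul_self_sqrt hN2.le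
  have hRsq : Real.sqrt R2 * Real.sqrt R2 = R2 := Real.mul_self_sqrt hR2.le
  have hmsq : Real.sqrt m * Real.sqrt m = m := Real.mul_self_sqrt hm.le
  have hrpos : 0 < Real.sqrt m * Real.sqrt R2 / Real.sqrt N2 :=
    div_pos (mul_pos hsm hRr) hNn
  have hrN : (Real.sqrt m * Real.sqrt R2 / Real.sqrt N2) * Real.sqrt N2
      = Real.sqrt m * Real.sqrt R2 := by field_simp
  have h1 := H _ hrpos
  set r : ℝ := Real.sqrt m * Real.sqrt R2 / Real.sqrt N2 with hrdef
  have h2 : (r * Real.sqrt N2) * (r * Real.sqrt N2)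
      = (Real.sqrt m * Real.sqrt R2) * (Real.sqrt m * Real.sqrt R2) := by rw [hrN]
  have h3 : (r * Real.sqrt N2) * (Real.sqrt m * Real.sqrt R2)
      = (Real.sqrt m * Real.sqrt R2) * (Real.sqrt m * Real.sqrt R2) := by rw [hrN]
  have e1 : r * r * N2 = m * R2 := by
    linear_combination (-(r * r)) * hNnsq + h2 +
      (Real.sqrt R2 * Real.sqrt R2) * hmsq + m * hRsq
  have e2 : m * R2 = r * (Real.sqrt N2 * Real.sqrt R2 * Real.sqrt m) := by
    linear_combination (-1 : ℝ) * h3 - (Real.sqrt R2 * Real.sqrt R2) * hmsq - m * hRsq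
  have e3 : r * (m - S) ≤ r * (Real.sqrt N2 * Real.sqrt R2 * Real.sqrt m) := by
    nlinarith [h1, e1, e2]
  exact le_of_mul_le_mul_left e3 hrpos


/-- Lemma `perceptron-mistake-bound`: for any closed convex cone
`𝕃`, the projected strategic perceptron (Algorithm 3 with stepsize `γ = 1`)
satisfies the regret-type hinge-loss inequality against any `(y,b) ∈ 𝕃 \ {0}`. -/
theorem alg3_hinge_regret
    {d : ℕ} (hd : 1 ≤ d)
    (p : Seminorm ℝ (E d)) (hpdef : ∀ x : E d, p x = 0 → x = 0)
    (c : ℝ) (hc : 0 < c)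
    (v : E d → E d) (hv0 : v 0 = 0)
    (hv : ∀ y : E d, y ≠ 0 → p (v y) ≤ 1 ∧ ⟪y, v y⟫ = dualNorm p y)
    (lbl : E d → ℝ) (hlbl : ∀ A : E d, lbl A = 1 ∨ lbl A = -1)
    (𝒜 : Set (E d))
    -- boundedness assumption
    (hbdd : ∃ D : ℝ, ∀ A ∈ 𝒜, ‖A‖ ≤ D)
    (hCbdd : BddAbove (Set.range fun y => ‖v y‖))
    -- the cone
    (L : Set (E d × ℝ)) (hLclosed : IsClosed L) (hLconvex : Convex ℝ L)
    (hLcone : ∀ q ∈ L, ∀ r : ℝ, 0 ≤ r → r • q ∈ L)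
    -- Algorithm 3 with cone `L` and stepsize `γ = 1`
    (T : ℕ) (Ag : ℕ → E d) (hAg : ∀ t, Ag t ∈ 𝒜)
    (ys : ℕ → E d) (bs : ℕ → ℝ)
    (hinit : ys 0 = 0 ∧ bs 0 = 0)
    (hupd : ∀ t : ℕ,
      (pred p c (resp p v c (Ag t) (ys t) (bs t)) (ys t) (bs t) ≠ lbl (Ag t) →
        (ys (t + 1), bs (t + 1)) ∈ L ∧
        ∀ q ∈ L,
          ‖ys (t + 1) - (ys t + lbl (Ag t) • proxy p v lbl c (Ag t) (ys t) (bs t))‖ ^ 2 +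
            (bs (t + 1) - (bs t + lbl (Ag t))) ^ 2 ≤
          ‖q.1 - (ys t + lbl (Ag t) • proxy p v lbl c (Ag t) (ys t) (bs t))‖ ^ 2 +
            (q.2 - (bs t + lbl (Ag t))) ^ 2) ∧
      (pred p c (resp p v c (Ag t) (ys t) (bs t)) (ys t) (bs t) = lbl (Ag t) →
        ys (t + 1) = ys t ∧ bs (t + 1) = bs t)) :
    ∀ (yy : E d) (bb : ℝ), (yy, bb) ∈ L → (yy, bb) ≠ (0, 0) →
    ∀ M : Finset ℕ,
      M = (Finset.range (T + 1)).filter (fun t =>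
        pred p c (resp p v c (Ag t) (ys t) (bs t)) (ys t) (bs t) ≠ lbl (Ag t)) →
    ∀ Dtil : ℝ, Dtil = sSup ((fun A => ‖A‖) '' 𝒜) + 2 * Cconst v / c →
      (M.card : ℝ) -
          ∑ t ∈ M, hinge (yy, bb) (proxy p v lbl c (Ag t) (ys t) (bs t)) (lbl (Ag t)) ≤
        Real.sqrt (‖yy‖ ^ 2 + bb ^ 2) * Real.sqrt (Dtil ^ 2 + 1) *
          Real.sqrt (M.card) := by
  intro yy bb hmemL hne M hM Dtil hDtil
  obtain ⟨D0, hD0⟩ := hbdd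
  have hAbdd : BddAbove ((fun A => ‖A‖) '' 𝒜) := by
    refine ⟨D0, ?_⟩; rintro x ⟨A, hA, rfl⟩; exact hD0 A hA
  have hAgD : ∀ t, ‖Ag t‖ ≤ sSup ((fun A => ‖A‖) '' 𝒜) := fun t =>
    le_csSup hAbdd ⟨Ag t, hAg t, rfl⟩
  have hC0 : 0 ≤ Cconst v :=
    le_trans (norm_nonneg (v 0)) (le_csSup hCbdd ⟨0, rfl⟩)
  have hDt0 : 0 ≤ Dtil := by
    rw [hDtil]
    have h1 := le_trans (norm_nonneg (Ag 0)) (hAgD 0)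
    have h2 : 0 ≤ 2 * Cconst v / c := by positivity
    linarith
  have hsD : ∀ t, ‖proxy p v lbl c (Ag t) (ys t) (bs t)‖ ≤ Dtil := by
    intro t
    rw [hDtil]
    have h1 := proxy_norm_le p c hc v hCbdd lbl (Ag t) (ys t) (bs t)
    linarith [hAgD t]
  by_cases hMcard : M.card = 0
  · rw [Finset.card_eq_zero] at hMcard
    subst hMcard
    simp
  · have hm1 : 0 < M.card := Nat.pos_of_ne_zero hMcard
    have hN2 : 0 < ‖yy‖ ^ 2 + bb ^ 2 := by
      rcases eq_or_ne yy 0 with hyy | hyy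
      · have hbb : bb ≠ 0 := by
          intro h; exact hne (by rw [hyy, h])
        have h1 : 0 < bb ^ 2 := by positivity
        have h2 : (0:ℝ) ≤ ‖yy‖ ^ 2 := by positivity
        linarith
      · have h1 : 0 < ‖yy‖ := norm_pos_iff.mpr hyy
        have h2 : (0:ℝ) ≤ bb ^ 2 := by positivity
        nlinarith
  -- master inequality for every positive scaling r
    have hmaster : ∀ r : ℝ, 0 < r →
        0 ≤ r * r * (‖yy‖ ^ 2 + bb ^ 2) + ((M.card : ℝ) * ((Dtil ^ 2 + 1) - 2 * r) +
          2 * r * ∑ t ∈ M,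
            hinge (yy, bb) (proxy p v lbl c (Ag t) (ys t) (bs t)) (lbl (Ag t))) := by
      intro r hr
      have hwL : (r • yy, r * bb) ∈ L := by
        have h := hLcone (yy, bb) hmemL r hr.le
        rwa [Prod.smul_mk, smul_eq_mul] at h
      have hstep : ∀ t : ℕ,
          ‖ys (t + 1) - r • yy‖ ^ 2 + (bs (t + 1) - r * bb) ^ 2 ≤
          ‖ys t - r • yy‖ ^ 2 + (bs t - r * bb) ^ 2 +
          (if pred p c (resp p v c (Ag t) (ys t) (bs t)) (ys t) (bs t) ≠ lbl (Ag t)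
           then (Dtil ^ 2 + 1) - 2 * r *
             (1 - hinge (yy, bb) (proxy p v lbl c (Ag t) (ys t) (bs t)) (lbl (Ag t)))
           else 0) := by
        intro t
        by_cases hmk : pred p c (resp p v c (Ag t) (ys t) (bs t)) (ys t) (bs t) ≠ lbl (Ag t)
        · rw [if_pos hmk]
          obtain ⟨hmemz, hmin⟩ := (hupd t).1 hmk
          refine step_bound hLconvex (ys t) (ys (t + 1))
            (proxy p v lbl c (Ag t) (ys t) (bs t)) yy (bs t) (bs (t + 1))
            (lbl (Ag t)) bb r (Dtil ^ 2 + 1)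
            (hinge (yy, bb) (proxy p v lbl c (Ag t) (ys t) (bs t)) (lbl (Ag t)))
            hmemz hwL hmin
            (keyB p c hc v hv lbl hlbl (Ag t) (ys t) (bs t) hmk)
            (one_sub_hinge_le yy bb _ _) ?_ ?_ hr
          · rcases hlbl (Ag t) with h | h <;> rw [h] <;> norm_num
          · have h1 := hsD t
            nlinarith [norm_nonneg (proxy p v lbl c (Ag t) (ys t) (bs t))]
        · rw [if_neg hmk]
          obtain ⟨h1, h2⟩ := (hupd t).2 (not_not.mp hmk)
          rw [h1, h2, add_zero]
      have htel : ∀ n : ℕ,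
          ‖ys n - r • yy‖ ^ 2 + (bs n - r * bb) ^ 2 ≤
          (‖ys 0 - r • yy‖ ^ 2 + (bs 0 - r * bb) ^ 2) +
          ∑ t ∈ Finset.range n,
            (if pred p c (resp p v c (Ag t) (ys t) (bs t)) (ys t) (bs t) ≠ lbl (Ag t)
             then (Dtil ^ 2 + 1) - 2 * r *
               (1 - hinge (yy, bb) (proxy p v lbl c (Ag t) (ys t) (bs t)) (lbl (Ag t)))
             else 0) := by
        intro n
        induction n with
        | zero => simp
        | succ k ih =>
          rw [Finset.sum_range_succ]
          linarith [hstep k]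
      have hPhi0 : ‖ys 0 - r • yy‖ ^ 2 + (bs 0 - r * bb) ^ 2
          = r * r * (‖yy‖ ^ 2 + bb ^ 2) := by
        rw [hinit.1, hinit.2, zero_sub, norm_neg, norm_smul, Real.norm_eq_abs,
          mul_pow, sq_abs]
        ring
      have hsum1 : ∑ t ∈ M,
          ((Dtil ^ 2 + 1) - 2 * r *
            (1 - hinge (yy, bb) (proxy p v lbl c (Ag t) (ys t) (bs t)) (lbl (Ag t))))
          = ∑ t ∈ Finset.range (T + 1),
            (if pred p c (resp p v c (Ag t) (ys t) (bs t)) (ys t) (bs t) ≠ lbl (Ag t)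
             then (Dtil ^ 2 + 1) - 2 * r *
               (1 - hinge (yy, bb) (proxy p v lbl c (Ag t) (ys t) (bs t)) (lbl (Ag t)))
             else 0) := by
        rw [hM]
        exact Finset.sum_filter _ _
      have hsum2 : ∑ t ∈ M,
          ((Dtil ^ 2 + 1) - 2 * r *
            (1 - hinge (yy, bb) (proxy p v lbl c (Ag t) (ys t) (bs t)) (lbl (Ag t))))
          = (M.card : ℝ) * ((Dtil ^ 2 + 1) - 2 * r) + 2 * r *
            ∑ t ∈ M, hinge (yy, bb) (proxy p v lbl c (Ag t) (ys t) (bs t)) (lbl (Ag t)) := by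
        calc ∑ t ∈ M,
            ((Dtil ^ 2 + 1) - 2 * r *
              (1 - hinge (yy, bb) (proxy p v lbl c (Ag t) (ys t) (bs t)) (lbl (Ag t))))
            = ∑ t ∈ M, (((Dtil ^ 2 + 1) - 2 * r) + 2 * r *
              hinge (yy, bb) (proxy p v lbl c (Ag t) (ys t) (bs t)) (lbl (Ag t))) :=
              Finset.sum_congr rfl fun t _ => by ring
          _ = M.card • ((Dtil ^ 2 + 1) - 2 * r) + 2 * r *
              ∑ t ∈ M, hinge (yy, bb) (proxy p v lbl c (Ag t) (ys t) (bs t)) (lbl (Ag t)) := by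
              rw [Finset.sum_add_distrib, Finset.sum_const, ← Finset.mul_sum]
          _ = (M.card : ℝ) * ((Dtil ^ 2 + 1) - 2 * r) + 2 * r *
              ∑ t ∈ M, hinge (yy, bb) (proxy p v lbl c (Ag t) (ys t) (bs t)) (lbl (Ag t)) := by
              rw [nsmul_eq_mul]
      have h0 := htel (T + 1)
      have hnn : 0 ≤ ‖ys (T + 1) - r • yy‖ ^ 2 + (bs (T + 1) - r * bb) ^ 2 := by
        positivity
      rw [← hsum1, hsum2, hPhi0] at h0
      linarith
    have hmcast : (0:ℝ) < (M.card : ℝ) := by exact_mod_cast hm1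
    have hfinal := master_alg (M.card : ℝ)
      (∑ t ∈ M, hinge (yy, bb) (proxy p v lbl c (Ag t) (ys t) (bs t)) (lbl (Ag t)))
      (‖yy‖ ^ 2 + bb ^ 2) (Dtil ^ 2 + 1) hmcast hN2 (by positivity) hmaster
    exact hfinal
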